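/- arXiv:2202.11835 — 7 statements merged into one kernel-verified Lean document; each statement's English description precedes it below -/
import Mathlib

section
/- The sum ∑_{k=2}^∞ (ζ(k) − 1) equals 1, where ζ is the Riemann zeta function (Shallit–Zikan theorem). -/
/-! Write ζ(k) − 1 = ∑_{n ≥ 2} n⁻ᵏ and swap the two sums, which is legitimate since all terms
are nonnegative. For fixed n the sum over k ≥ 2 is geometric, ∑_{k ≥ 2} n⁻ᵏ = 1/(n(n − 1))
= 1/(n − 1) − 1/n, and these telescope to 1. -/

open Filter Topology

lemma hasSum_sub_succ_of_antitone {f : ℕ → ℝ} {l : ℝ} (hf : Antitone f)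
    (hl : Tendsto f atTop (𝓝 l)) : HasSum (fun n ↦ f n - f (n + 1)) (f 0 - l) := by
  rw [hasSum_iff_tendsto_nat_of_nonneg (fun n ↦ sub_nonneg.2 (hf n.le_succ))]
  simpa only [Finset.sum_range_sub'] using tendsto_const_nhds.sub hl

lemma hasSum_pow_add_of_lt_one {r : ℝ} (h₀ : 0 ≤ r) (h₁ : r < 1) (m : ℕ) :
    HasSum (fun k ↦ r ^ (k + m)) (r ^ m * (1 - r)⁻¹) := by
  simpa only [pow_add, mul_comm] using (hasSum_geometric_of_lt_one h₀ h₁).mul_left (r ^ m)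

lemma tsum_tsum_swap_of_nonneg {α β : Type*} {f : α → β → ℝ} {g : α → ℝ} {s : ℝ}
    (hf : ∀ a b, 0 ≤ f a b) (hrow : ∀ a, HasSum (f a) (g a)) (hg : HasSum g s) :
    ∑' b, ∑' a, f a b = s := by
  have hsum : Summable (Function.uncurry f) := by
    refine (summable_prod_of_nonneg fun p ↦ hf p.1 p.2).2 ⟨fun a ↦ (hrow a).summable, ?_⟩
    simpa only [Function.uncurry_apply_pair, (hrow _).tsum_eq] using hg.summable
  rw [hsum.tsum_comm, tsum_congr fun a ↦ (hrow a).tsum_eq, hg.tsum_eq]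

lemma riemannZeta_natCast_sub_one {k : ℕ} (hk : 1 < k) :
    riemannZeta k - 1 = ((∑' n : ℕ, ((n : ℝ) + 2)⁻¹ ^ k : ℝ) : ℂ) := by
  have hs : Summable fun n : ℕ ↦ ((n : ℝ) ^ k)⁻¹ := by
    simpa only [one_div] using Real.summable_one_div_nat_pow.2 hk
  have hcast : ∑' n : ℕ, 1 / (n : ℂ) ^ k = ((∑' n : ℕ, ((n : ℝ) ^ k)⁻¹ : ℝ) : ℂ) := by
    push_cast [Complex.ofReal_tsum]
    simp only [one_div]
  rw [zeta_nat_eq_tsum_of_gt_one hk, hcast, ← hs.sum_add_tsum_nat_add 2]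
  simp [Finset.sum_range_succ, zero_pow (by omega : k ≠ 0), inv_pow]

lemma hasSum_inv_add_two_pow_add_two (n : ℕ) :
    HasSum (fun k ↦ ((n : ℝ) + 2)⁻¹ ^ (k + 2)) (((n : ℝ) + 1)⁻¹ - ((n : ℝ) + 2)⁻¹) := by
  have hlt : ((n : ℝ) + 2)⁻¹ < 1 := inv_lt_one_of_one_lt₀ (by linarith [n.cast_nonneg (α := ℝ)])
  convert hasSum_pow_add_of_lt_one (by positivity) hlt 2 using 1
  rw [show 1 - ((n : ℝ) + 2)⁻¹ = ((n : ℝ) + 1) / ((n : ℝ) + 2) by field_simp; ring]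
  field_simp
  ring

lemma hasSum_inv_succ_sub_inv_succ_succ :
    HasSum (fun n : ℕ ↦ ((n : ℝ) + 1)⁻¹ - ((n : ℝ) + 2)⁻¹) 1 := by
  have hanti : Antitone fun n : ℕ ↦ ((n : ℝ) + 1)⁻¹ := fun m n hmn ↦ by
    dsimp only
    gcongr
  have hlim : Tendsto (fun n : ℕ ↦ ((n : ℝ) + 1)⁻¹) atTop (𝓝 0) := by
    simpa only [one_div] using (tendsto_one_div_add_atTop_nhds_zero_nat (𝕜 := ℝ))
  convert hasSum_sub_succ_of_antitone hanti hlim using 1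
  · ext n
    push_cast
    ring
  · simp

theorem shallit_zikan :
    ∑' k : ℕ, (riemannZeta ((k : ℂ) + 2) - 1) = 1 := by
  have hterm (k : ℕ) :
      riemannZeta ((k : ℂ) + 2) - 1 = ((∑' n : ℕ, ((n : ℝ) + 2)⁻¹ ^ (k + 2) : ℝ) : ℂ) := by
    exact_mod_cast riemannZeta_natCast_sub_one (k := k + 2) (by omega)
  simp_rw [hterm, ← Complex.ofReal_tsum]
  rw [tsum_tsum_swap_of_nonneg (fun _ _ ↦ by positivity) hasSum_inv_add_two_pow_add_two
    hasSum_inv_succ_sub_inv_succ_succ, Complex.ofReal_one]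
end

section
/- The sum over all perfect powers p of 1/(p−1) equals 1 (Euler–Goldbach theorem), where each perfect power is counted once. Equivalently, ∑_{k=2}^∞ (ζ(k) − 1) = 1 rearranged over the set of perfect powers: ∑_{p ∈ P} 1/(p−1) = 1 where P = {n^m : n, m ≥ 2}. -/
/-!
Every `n ≥ 2` is uniquely `a ^ e` with `a` not a perfect power (`e` is the gcd of the exponents in
the prime factorisation of `n`). Hence `(n, m) ↦ (a ^ m, e)` matches pairs with `n, m ≥ 2` with
pairs `(p, k)`, `p` a perfect power and `k ≥ 1`, so that `n ^ m = p ^ k`. Summing `x⁻¹` over both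
index sets, with geometric series in the inner exponent,
`∑ₚ 1 / (p - 1) = ∑ₚ ∑_{k ≥ 1} p⁻ᵏ = ∑_{n ≥ 2} ∑_{m ≥ 2} n⁻ᵐ = ∑_{n ≥ 2} 1 / (n (n - 1)) = 1`,
the last sum telescoping. The computation is carried out in `ℝ≥0∞`, where rearranging a series
needs no summability argument.
-/

open ENNReal

namespace Nat

def factorizationGcd (n : ℕ) : ℕ := n.factorization.support.gcd n.factorization

lemma dvd_factorizationGcd_iff {m n : ℕ} :
    m ∣ n.factorizationGcd ↔ ∀ p, m ∣ n.factorization p := by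
  rw [factorizationGcd, Finset.dvd_gcd_iff]
  refine ⟨fun h p => ?_, fun h p _ => h p⟩
  by_cases hp : p ∈ n.factorization.support
  · exact h p hp
  · simp [Finsupp.notMem_support_iff.mp hp]

lemma factorizationGcd_eq_zero_iff {n : ℕ} : n.factorizationGcd = 0 ↔ n = 0 ∨ n = 1 := by
  rw [← factorization_eq_zero_iff', factorizationGcd, Finset.gcd_eq_zero_iff]
  simp only [Finsupp.mem_support_iff, ne_eq, not_imp_self, Finsupp.ext_iff, Finsupp.coe_zero,
    Pi.zero_apply]

lemma factorizationGcd_pow (a e : ℕ) : (a ^ e).factorizationGcd = e * a.factorizationGcd := by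
  rcases eq_or_ne e 0 with rfl | he
  · simp [factorizationGcd]
  rw [factorizationGcd, factorizationGcd, factorization_pow, Finsupp.support_smul_eq he,
    Finsupp.coe_smul]
  simpa [Pi.mul_def] using
    Finset.gcd_mul_left (s := a.primeFactors) (f := a.factorization) (a := e)

lemma floorRoot_pow_of_dvd_factorizationGcd {m n : ℕ} (hn : n ≠ 0)
    (h : m ∣ n.factorizationGcd) : floorRoot m n ^ m = n := by
  rcases eq_or_ne m 0 with rfl | hm
  · obtain rfl : n = 1 := by simpa [hn] using factorizationGcd_eq_zero_iff.mp (zero_dvd_iff.mp h)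
    simp
  refine eq_of_factorization_eq (by simp [hm, hn]) hn fun p => ?_
  simp [Nat.mul_div_cancel' (dvd_factorizationGcd_iff.mp h p)]

lemma factorizationGcd_pos {n : ℕ} (hn : 1 < n) : 0 < n.factorizationGcd :=
  Nat.pos_of_ne_zero (by rw [Ne, factorizationGcd_eq_zero_iff]; omega)

def primitiveBase (n : ℕ) : ℕ := floorRoot n.factorizationGcd n

lemma primitiveBase_pow_factorizationGcd {n : ℕ} (hn : n ≠ 0) :
    n.primitiveBase ^ n.factorizationGcd = n :=
  floorRoot_pow_of_dvd_factorizationGcd hn dvd_rfl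

lemma primitiveBase_pow {a k : ℕ} (ha : a.factorizationGcd = 1) (hk : k ≠ 0) :
    (a ^ k).primitiveBase = a := by
  rw [primitiveBase, factorizationGcd_pow, ha, mul_one, floorRoot_pow_self hk]

lemma factorizationGcd_primitiveBase {n : ℕ} (hn : 1 < n) :
    n.primitiveBase.factorizationGcd = 1 := by
  have h := factorizationGcd_pow n.primitiveBase n.factorizationGcd
  rw [primitiveBase_pow_factorizationGcd (by omega)] at h
  exact (Nat.mul_eq_left (factorizationGcd_pos hn).ne').mp h.symm

lemma one_lt_primitiveBase {n : ℕ} (hn : 1 < n) : 1 < n.primitiveBase := by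
  have h := factorizationGcd_primitiveBase hn
  by_contra hle
  have : n.primitiveBase = 0 ∨ n.primitiveBase = 1 := by omega
  rw [← factorizationGcd_eq_zero_iff] at this
  omega

def IsPerfectPower (p : ℕ) : Prop := ∃ n m : ℕ, 2 ≤ n ∧ 2 ≤ m ∧ p = n ^ m

lemma isPerfectPower_iff {p : ℕ} : IsPerfectPower p ↔ 1 < p ∧ 1 < p.factorizationGcd := by
  constructor
  · rintro ⟨n, m, hn, hm, rfl⟩
    refine ⟨Nat.one_lt_pow (by omega) hn, ?_⟩
    rw [factorizationGcd_pow]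
    exact lt_of_lt_of_le hm (Nat.le_mul_of_pos_right m (factorizationGcd_pos hn))
  · rintro ⟨hp, hg⟩
    exact ⟨p.primitiveBase, p.factorizationGcd, one_lt_primitiveBase hp, hg,
      (primitiveBase_pow_factorizationGcd (by omega)).symm⟩

end Nat

open Nat

/-- Writing `n = a ^ e` with `a` not a perfect power, `n ^ m = (a ^ m) ^ e`: the exponents trade
places. -/
def perfectPowerEquiv :
    {n : ℕ // 1 < n} × {m : ℕ // 1 < m} ≃ {p : ℕ // IsPerfectPower p} × {k : ℕ // 0 < k} where
  toFun x := (⟨x.1.1.primitiveBase ^ x.2.1, _, _, one_lt_primitiveBase x.1.2, x.2.2, rfl⟩,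
    ⟨x.1.1.factorizationGcd, factorizationGcd_pos x.1.2⟩)
  invFun y :=
    (⟨y.1.1.primitiveBase ^ y.2.1,
      one_lt_pow y.2.2.ne' (one_lt_primitiveBase (isPerfectPower_iff.mp y.1.2).1)⟩,
     ⟨y.1.1.factorizationGcd, (isPerfectPower_iff.mp y.1.2).2⟩)
  left_inv := by
    rintro ⟨⟨n, hn⟩, ⟨m, hm⟩⟩
    refine Prod.ext (Subtype.ext ?_) (Subtype.ext ?_) <;> dsimp only
    · rw [primitiveBase_pow (factorizationGcd_primitiveBase hn) (by omega),
        primitiveBase_pow_factorizationGcd (by omega)]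
    · rw [factorizationGcd_pow, factorizationGcd_primitiveBase hn, mul_one]
  right_inv := by
    rintro ⟨⟨p, hp⟩, ⟨k, hk⟩⟩
    have hp1 := (isPerfectPower_iff.mp hp).1
    refine Prod.ext (Subtype.ext ?_) (Subtype.ext ?_) <;> dsimp only
    · rw [primitiveBase_pow (factorizationGcd_primitiveBase hp1) (by omega),
        primitiveBase_pow_factorizationGcd (by omega)]
    · rw [factorizationGcd_pow, factorizationGcd_primitiveBase hp1, mul_one]

lemma perfectPowerEquiv_pow (x : {n : ℕ // 1 < n} × {m : ℕ // 1 < m}) :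
    ((perfectPowerEquiv x).1 : ℕ) ^ ((perfectPowerEquiv x).2 : ℕ) = (x.1 : ℕ) ^ (x.2 : ℕ) := by
  change (x.1.1.primitiveBase ^ x.2.1) ^ x.1.1.factorizationGcd = _
  rw [← pow_mul, mul_comm, pow_mul, primitiveBase_pow_factorizationGcd (by have := x.1.2; omega)]

theorem tsum_isPerfectPower_pow (f : ℕ → ℝ≥0∞) :
    ∑' (p : {p : ℕ // IsPerfectPower p}) (k : {k : ℕ // 0 < k}), f (p ^ (k : ℕ)) =
      ∑' (n : {n : ℕ // 1 < n}) (m : {m : ℕ // 1 < m}), f (n ^ (m : ℕ)) := by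
  rw [← ENNReal.tsum_prod, ← ENNReal.tsum_prod, ← perfectPowerEquiv.tsum_eq]
  simp only [perfectPowerEquiv_pow]

theorem tsum_subtype_lt {M : Type*} [AddCommMonoid M] [TopologicalSpace M] (f : ℕ → M) (c : ℕ) :
    ∑' k : {k : ℕ // c < k}, f k = ∑' k : ℕ, f (k + c + 1) :=
  let e : ℕ ≃ {k : ℕ // c < k} := ⟨fun k => ⟨k + c + 1, by omega⟩, fun k => k - c - 1,
    fun k => by dsimp only; omega, fun k => Subtype.ext (by have := k.2; simp; omega)⟩
  (e.tsum_eq (fun k => f k)).symm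

theorem hasSum_inv_mul_succ_mul_succ :
    HasSum (fun k : ℕ => ((k + 1 : ℝ) * (k + 2))⁻¹) 1 := by
  have hterm (k : ℕ) : ((k + 1 : ℝ) * (k + 2))⁻¹ = (k + 1 : ℝ)⁻¹ - ((k + 1 : ℕ) + 1 : ℝ)⁻¹ := by
    push_cast; field_simp; ring
  rw [hasSum_iff_tendsto_nat_of_nonneg (fun k => by positivity)]
  simp only [hterm, Finset.sum_range_sub' (fun k : ℕ => (k + 1 : ℝ)⁻¹)]
  simpa using (tendsto_one_div_add_atTop_nhds_zero_nat (𝕜 := ℝ)).const_sub 1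

namespace ENNReal

theorem tsum_inv_pow_succ (x : ℝ≥0∞) : ∑' k : ℕ, x⁻¹ ^ (k + 1) = (x - 1)⁻¹ := by
  rw [tsum_geometric_add_one]
  rcases eq_or_ne x 0 with rfl | hx0
  · simp
  rcases eq_or_ne x ⊤ with rfl | hxt
  · simp
  rw [← ENNReal.mul_inv (Or.inl hx0) (Or.inl hxt), ENNReal.mul_sub (fun _ _ => hxt), mul_one,
    ENNReal.mul_inv_cancel hx0 hxt]

theorem tsum_subtype_lt_inv_pow (x : ℝ≥0∞) (c : ℕ) :
    ∑' k : {k : ℕ // c < k}, x⁻¹ ^ (k : ℕ) = x⁻¹ ^ c * (x - 1)⁻¹ := by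
  rw [tsum_subtype_lt, ← tsum_inv_pow_succ, ← ENNReal.tsum_mul_left]
  exact tsum_congr fun k => by ring

theorem tsum_inv_mul_inv_sub_one :
    ∑' n : {n : ℕ // 1 < n}, (n : ℝ≥0∞)⁻¹ * ((n : ℝ≥0∞) - 1)⁻¹ = 1 := by
  have hterm (k : ℕ) : ((k + 1 + 1 : ℕ) : ℝ≥0∞)⁻¹ * (((k + 1 + 1 : ℕ) : ℝ≥0∞) - 1)⁻¹ =
      ENNReal.ofReal ((k + 1 : ℝ) * (k + 2))⁻¹ := by
    rw [show (k + 1 : ℝ) * (k + 2) = ((k + 2) * (k + 1) : ℕ) by push_cast; ring,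
      ENNReal.ofReal_inv_of_pos (by positivity), ENNReal.ofReal_natCast,
      ← ENNReal.mul_inv (by simp) (by simp)]
    push_cast
    rw [ENNReal.add_sub_cancel_right ENNReal.one_ne_top, add_assoc, one_add_one_eq_two]
  rw [tsum_subtype_lt (fun n : ℕ => (n : ℝ≥0∞)⁻¹ * ((n : ℝ≥0∞) - 1)⁻¹), tsum_congr hterm,
    ← ENNReal.ofReal_tsum_of_nonneg (fun k => by positivity) hasSum_inv_mul_succ_mul_succ.summable,
    hasSum_inv_mul_succ_mul_succ.tsum_eq, ENNReal.ofReal_one]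

end ENNReal

theorem tsum_isPerfectPower_inv_sub_one :
    ∑' p : {p : ℕ // IsPerfectPower p}, ((p : ℝ≥0∞) - 1)⁻¹ = 1 := calc
  _ = ∑' (p : {p : ℕ // IsPerfectPower p}) (k : {k : ℕ // 0 < k}),
        ((p ^ (k : ℕ) : ℕ) : ℝ≥0∞)⁻¹ := by
      refine tsum_congr fun p => ?_
      simp only [Nat.cast_pow, ENNReal.inv_pow]
      rw [ENNReal.tsum_subtype_lt_inv_pow, pow_zero, one_mul]
  _ = ∑' (n : {n : ℕ // 1 < n}) (m : {m : ℕ // 1 < m}), ((n ^ (m : ℕ) : ℕ) : ℝ≥0∞)⁻¹ :=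
      tsum_isPerfectPower_pow fun q => (q : ℝ≥0∞)⁻¹
  _ = ∑' n : {n : ℕ // 1 < n}, (n : ℝ≥0∞)⁻¹ * ((n : ℝ≥0∞) - 1)⁻¹ := by
      refine tsum_congr fun n => ?_
      simp only [Nat.cast_pow, ENNReal.inv_pow]
      rw [ENNReal.tsum_subtype_lt_inv_pow, pow_one]
  _ = 1 := ENNReal.tsum_inv_mul_inv_sub_one

theorem euler_goldbach :
    ∑' p : {p : ℕ // ∃ n m : ℕ, 2 ≤ n ∧ 2 ≤ m ∧ p = n ^ m},
      (1 : ℝ) / ((p : ℕ) - 1 : ℝ) = 1 := by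
  have hp (p : {p : ℕ // IsPerfectPower p}) : 1 < (p : ℕ) := (isPerfectPower_iff.mp p.2).1
  have hfin (p : {p : ℕ // IsPerfectPower p}) : ((p : ℝ≥0∞) - 1)⁻¹ ≠ ⊤ := by
    simpa [tsub_eq_zero_iff_le] using hp p
  calc _ = ∑' p : {p : ℕ // IsPerfectPower p}, (((p : ℝ≥0∞) - 1)⁻¹).toReal := by
        refine tsum_congr fun p => ?_
        rw [ENNReal.toReal_inv, ENNReal.toReal_sub_of_le (by exact_mod_cast (hp p).le)
          (natCast_ne_top _), one_div, toReal_natCast, toReal_one]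
    _ = 1 := by
        rw [← ENNReal.tsum_toReal_eq hfin, tsum_isPerfectPower_inv_sub_one, toReal_one]
end

section
/- The sum ∑_{n=1}^∞ 1/(n²+1) equals −1/2 + (π/2)·coth(π). -/
open Real Complex MeasureTheory intervalIntegral AddCircle

private lemma coshCoeff (n : ℤ) :
    haveI : Fact (0 < 2 * Real.pi) := ⟨by positivity⟩
    fourierCoeff (AddCircle.liftIco (2*Real.pi) (-Real.pi) (fun x : ℝ => Complex.cosh x)) n
      = Complex.exp (n*Real.pi*Complex.I) *
          Complex.ofReal (Real.sinh Real.pi / (Real.pi * (1 + (n:ℝ)^2))) := by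
  have pi_ne : (Real.pi : ℂ) ≠ 0 := Complex.ofReal_ne_zero.mpr Real.pi_ne_zero
  haveI : Fact (0 < 2 * Real.pi) := ⟨by positivity⟩
  have pi_pos := Real.pi_pos
  set e : ℂ := Complex.exp (n*Real.pi*Complex.I) with he
  have hee : e * e = 1 := by
    rw [he, ← Complex.exp_add, show ((n:ℂ)*Real.pi*Complex.I + n*Real.pi*Complex.I)
      = n * (2*Real.pi*Complex.I) by ring, Complex.exp_int_mul_two_pi_mul_I]
  have hinv : Complex.exp (-((n:ℂ)*Real.pi*Complex.I)) = e := by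
    rw [Complex.exp_neg]
    exact inv_eq_of_mul_eq_one_left hee
  have hc1 : (1 - Complex.I*(n:ℂ)) ≠ 0 := by
    simp [Complex.ext_iff]
  have hc2 : (-1 - Complex.I*(n:ℂ)) ≠ 0 := by
    simp [Complex.ext_iff]
  have hint : ∀ c : ℂ, c ≠ 0 → (∫ x in (-Real.pi)..(-Real.pi + 2*Real.pi),
      Complex.exp (c * x)) = (Complex.exp (c*Real.pi) - Complex.exp (c*(-Real.pi:ℝ)))/c := by
    intro c hc
    rw [integral_exp_mul_complex hc, show -Real.pi + 2*Real.pi = Real.pi by ring]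
  rw [fourierCoeff_liftIco_eq, fourierCoeffOn_eq_integral]
  have hx : ∀ x : ℝ, @fourier (-Real.pi + 2*Real.pi - -Real.pi) (-n)
        (x : AddCircle (-Real.pi + 2*Real.pi - -Real.pi)) • Complex.cosh x
      = (Complex.exp ((1 - Complex.I*n)*x) + Complex.exp ((-1 - Complex.I*n)*x))/2 := by
    intro x
    rw [fourier_coe_apply, smul_eq_mul]
    rw [show (2*(Real.pi:ℂ)*Complex.I*(↑(-n))*x/(↑(-Real.pi + 2*Real.pi - -Real.pi)) : ℂ)
        = (-(n*Complex.I))*x by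
      push_cast; field_simp; ring]
    rw [Complex.cosh, ← mul_div_assoc, mul_add, ← Complex.exp_add, ← Complex.exp_add]
    rw [show (-(↑n*Complex.I)*↑x + ↑x : ℂ) = (1 - Complex.I*n)*x by ring,
        show (-(↑n*Complex.I)*↑x + -↑x : ℂ) = (-1 - Complex.I*n)*x by ring]
  simp_rw [hx]
  have i1 : IntervalIntegrable (fun x:ℝ => Complex.exp ((1 - Complex.I*n)*x)) MeasureTheory.volume (-Real.pi) (-Real.pi + 2*Real.pi) :=
    (by fun_prop : Continuous fun x:ℝ => Complex.exp ((1 - Complex.I*n)*x)).intervalIntegrable _ _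
  have i2 : IntervalIntegrable (fun x:ℝ => Complex.exp ((-1 - Complex.I*n)*x)) MeasureTheory.volume (-Real.pi) (-Real.pi + 2*Real.pi) :=
    (by fun_prop : Continuous fun x:ℝ => Complex.exp ((-1 - Complex.I*n)*x)).intervalIntegrable _ _
  rw [intervalIntegral.integral_div, intervalIntegral.integral_add i1 i2,
    hint _ hc1, hint _ hc2]
  have e1 : Complex.exp ((1 - Complex.I*n) * Real.pi) = Complex.exp Real.pi * e := by
    rw [← hinv, ← Complex.exp_add]; congr 1; ring
  have e2 : Complex.exp ((1 - Complex.I*n) * (-Real.pi:ℝ)) = Complex.exp (-Real.pi) * e := by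
    rw [he, ← Complex.exp_add]; push_cast; congr 1; ring
  have e3 : Complex.exp ((-1 - Complex.I*n) * Real.pi) = Complex.exp (-Real.pi) * e := by
    rw [← hinv, ← Complex.exp_add]; push_cast; congr 1; ring
  have e4 : Complex.exp ((-1 - Complex.I*n) * (-Real.pi:ℝ)) = Complex.exp Real.pi * e := by
    rw [he, ← Complex.exp_add]; push_cast; congr 1; ring
  rw [e1, e2, e3, e4]
  have hsinh : (Real.sinh Real.pi : ℂ) = (Complex.exp Real.pi - Complex.exp (-Real.pi))/2 := by
    rw [Complex.ofReal_sinh, Complex.sinh]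
  have hden : ((1:ℂ) + (n:ℂ)^2) ≠ 0 := by
    have : ((1:ℂ) + (n:ℂ)^2) = ((1 + (n:ℝ)^2 : ℝ) : ℂ) := by push_cast; ring
    rw [this]
    exact_mod_cast ne_of_gt (by positivity : (0:ℝ) < 1 + (n:ℝ)^2)
  have hfact : (1 - Complex.I*(n:ℂ)) * (-1 - Complex.I*(n:ℂ)) = -(1 + (n:ℂ)^2) := by
    linear_combination (n:ℂ)^2 * Complex.I_sq
  have hR : ((Real.sinh Real.pi / (Real.pi * (1 + (n:ℝ)^2)) : ℝ) : ℂ)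
      = ((Complex.exp ↑Real.pi - Complex.exp (-↑Real.pi))/2) / (↑Real.pi * (1+(n:ℂ)^2)) := by
    rw [Complex.ofReal_div, hsinh]; push_cast; ring
  rw [hR, show (-Real.pi + 2*Real.pi - -Real.pi : ℝ) = 2*Real.pi by ring, real_smul]
  push_cast
  field_simp
  linear_combination (-(4:ℂ) * (Real.pi:ℂ) * e * (Complex.exp (Real.pi:ℂ) - Complex.exp (-(Real.pi:ℂ)))) * hfact
    + ((n:ℂ)^2 * e * (Complex.exp (Real.pi:ℂ) - Complex.exp (-(Real.pi:ℂ))) * (4 * (Real.pi:ℂ) - 2)) * Complex.I_sq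

private lemma summable_aux : Summable (fun n : ℕ => (1:ℝ) / (1 + (n:ℝ)^2)) := by
  rw [← summable_nat_add_iff 1]
  have h2 : Summable (fun n : ℕ => (1:ℝ) / ((n:ℝ)+1)^2) := by
    have := (summable_nat_add_iff 1).mpr (Real.summable_one_div_nat_pow.mpr one_lt_two)
    simpa using this
  refine Summable.of_nonneg_of_le (fun n => by positivity) (fun n => ?_) h2
  apply one_div_le_one_div_of_le
  · positivity
  · push_cast; nlinarith [sq_nonneg ((n:ℝ)+1)]

theorem sum_one_div_sq_add_one :
    ∑' n : ℕ, (1 : ℝ) / (((n : ℝ) + 1) ^ 2 + 1)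
      = -1 / 2 + Real.pi / 2 * (Real.cosh Real.pi / Real.sinh Real.pi) := by
  have pi_pos := Real.pi_pos
  have pi_ne : (Real.pi : ℂ) ≠ 0 := Complex.ofReal_ne_zero.mpr Real.pi_ne_zero
  have sinh_pos : 0 < Real.sinh Real.pi := Real.sinh_pos_iff.mpr pi_pos
  haveI : Fact (0 < 2 * Real.pi) := ⟨by positivity⟩
  -- the continuous function on the circle
  set f : ℝ → ℂ := fun x => Complex.cosh x with hf
  have hcont : Continuous (AddCircle.liftIco (2*Real.pi) (-Real.pi) f) := by
    apply AddCircle.liftIco_continuous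
    · show Complex.cosh _ = Complex.cosh _
      rw [show -Real.pi + 2*Real.pi = Real.pi by ring]
      push_cast
      rw [Complex.cosh_neg]
    · exact (Complex.continuous_cosh.comp Complex.continuous_ofReal).continuousOn
  set F : C(AddCircle (2*Real.pi), ℂ) := ⟨_, hcont⟩ with hF
  -- summability over ℤ of 1/(1+n²)
  have hGsum : Summable (fun n : ℤ => (1:ℝ) / (1 + (n:ℝ)^2)) := by
    refine Summable.of_nat_of_neg_add_one ?_ ?_
    · exact summable_aux.congr (by intro n; push_cast; ring_nf)
    · refine ((summable_nat_add_iff 1).mpr summable_aux).congr (by intro n; push_cast; ring_nf)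
  have hcF : ∀ m : ℤ, fourierCoeff (F : AddCircle (2*Real.pi) → ℂ) m
      = Complex.exp (m*Real.pi*Complex.I) *
          Complex.ofReal (Real.sinh Real.pi / (Real.pi * (1 + (m:ℝ)^2))) := fun m => coshCoeff m
  -- summability of Fourier coefficients
  have hsumm : Summable (fourierCoeff (F : AddCircle (2*Real.pi) → ℂ)) := by
    have : (fourierCoeff (F : AddCircle (2*Real.pi) → ℂ))
        = fun n : ℤ => Complex.exp (n*Real.pi*Complex.I) *
            Complex.ofReal (Real.sinh Real.pi / (Real.pi * (1 + (n:ℝ)^2))) := by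
      funext n; exact hcF n
    rw [this]
    apply Summable.of_norm
    have hb : ∀ n : ℤ, ‖Complex.exp (n*Real.pi*Complex.I) *
        Complex.ofReal (Real.sinh Real.pi / (Real.pi * (1 + (n:ℝ)^2)))‖
        = (Real.sinh Real.pi / Real.pi) * ((1:ℝ) / (1 + (n:ℝ)^2)) := by
      intro n
      rw [norm_mul, Complex.norm_exp]
      have : ((n:ℂ)*Real.pi*Complex.I).re = 0 := by simp
      rw [this, Real.exp_zero, one_mul, Complex.norm_real, Real.norm_eq_abs,
        _root_.abs_of_nonneg (div_nonneg sinh_pos.le (by positivity))]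
      field_simp
    exact (hGsum.mul_left _).congr (fun n => (hb n).symm)
  -- evaluate the Fourier series at π
  have hpt := has_pointwise_sum_fourier_series_of_summable hsumm
    ((Real.pi : ℝ) : AddCircle (2*Real.pi))
  -- value of F at π
  have hπcoe : ((Real.pi : ℝ) : AddCircle (2*Real.pi)) = ((-Real.pi : ℝ) : AddCircle (2*Real.pi)) := by
    have h := AddCircle.coe_add_period (2*Real.pi) (-Real.pi)
    rw [show -Real.pi + 2*Real.pi = Real.pi by ring] at h
    exact h
  have hFπ : F ((Real.pi : ℝ) : AddCircle (2*Real.pi)) = Complex.cosh (Real.pi : ℂ) := by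
    show AddCircle.liftIco (2*Real.pi) (-Real.pi) f _ = _
    rw [hπcoe, AddCircle.liftIco_coe_apply ⟨le_refl _, by linarith⟩]
    show Complex.cosh _ = _
    push_cast
    rw [Complex.cosh_neg]
  -- each term of the series
  have hterm : ∀ n : ℤ, fourierCoeff (F : AddCircle (2*Real.pi) → ℂ) n •
        fourier n ((Real.pi : ℝ) : AddCircle (2*Real.pi))
      = ((Real.sinh Real.pi / (Real.pi * (1 + (n:ℝ)^2)) : ℝ) : ℂ) := by
    intro n
    rw [hcF n, smul_eq_mul, fourier_coe_apply]
    rw [show (2*(Real.pi:ℂ)*Complex.I*(n:ℂ)*(Real.pi:ℂ)/((2*Real.pi : ℝ):ℂ) : ℂ)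
        = (n:ℂ)*Real.pi*Complex.I by push_cast; field_simp]
    rw [mul_assoc, mul_comm (Complex.ofReal _), ← mul_assoc, ← Complex.exp_add,
      show ((n:ℂ)*Real.pi*Complex.I + (n:ℂ)*Real.pi*Complex.I) = n * (2*Real.pi*Complex.I) by ring,
      Complex.exp_int_mul_two_pi_mul_I, one_mul]
  have hZ : HasSum (fun n : ℤ => Real.sinh Real.pi / (Real.pi * (1 + (n:ℝ)^2)))
      (Real.cosh Real.pi) := by
    rw [← Complex.hasSum_ofReal]
    have := hpt
    rw [hFπ] at this
    rw [Complex.ofReal_cosh]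
    exact HasSum.congr_fun this (fun n => (hterm n).symm)
  -- the sum over ℕ
  have hsumN : Summable (fun n : ℕ => (1:ℝ) / (((n:ℝ)+1)^2 + 1)) :=
    ((summable_nat_add_iff 1).mpr summable_aux).congr
      (by intro n; push_cast; ring_nf)
  set S : ℝ := ∑' n : ℕ, (1 : ℝ) / (((n : ℝ) + 1) ^ 2 + 1) with hS
  have hSsum : HasSum (fun n : ℕ => (1:ℝ) / (((n:ℝ)+1)^2 + 1)) S := hsumN.hasSum
  set k : ℝ := Real.sinh Real.pi / Real.pi with hk
  have hpos : ∀ n : ℕ, Real.sinh Real.pi / (Real.pi * (1 + ((((n:ℤ)+1) : ℤ):ℝ)^2))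
      = k * ((1:ℝ) / (((n:ℝ)+1)^2 + 1)) := by
    intro n
    rw [hk]
    push_cast
    have h1 : ((n:ℝ)+1)^2 + 1 ≠ 0 := by positivity
    field_simp
    ring
  have hneg : ∀ n : ℕ, Real.sinh Real.pi / (Real.pi * (1 + (((-((n:ℤ)+1)) : ℤ):ℝ)^2))
      = k * ((1:ℝ) / (((n:ℝ)+1)^2 + 1)) := by
    intro n
    rw [hk]
    push_cast
    have h1 : ((n:ℝ)+1)^2 + 1 ≠ 0 := by positivity
    field_simp
    ring
  have hZ' : HasSum (fun n : ℤ => Real.sinh Real.pi / (Real.pi * (1 + (n:ℝ)^2)))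
      (k*S + Real.sinh Real.pi / (Real.pi * (1 + ((0:ℤ):ℝ)^2)) + k*S) := by
    refine HasSum.of_add_one_of_neg_add_one ?_ ?_
    · exact ((hSsum.mul_left k).congr_fun hpos)
    · exact ((hSsum.mul_left k).congr_fun hneg)
  have heq := hZ.unique hZ'
  norm_num at heq
  rw [hk] at heq
  have hpi : Real.pi ≠ 0 := Real.pi_ne_zero
  have hsinh : Real.sinh Real.pi ≠ 0 := ne_of_gt sinh_pos
  field_simp at heq ⊢
  nlinarith [heq]
end

section
/- For every positive integer N and every complex number z on the boundary of the square with vertices ±(N+1/2) ± (N+1/2)i, one has |cot(πz)| ≤ coth(3π/2). -/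
open Complex

lemma normSq_sin_add_mul_I (a b : ℝ) :
    Complex.normSq (Complex.sin (↑a + ↑b * I)) = Real.sin a ^ 2 + Real.sinh b ^ 2 := by
  have h : Complex.sin (↑a + ↑b * I)
      = ↑(Real.sin a * Real.cosh b) + ↑(Real.cos a * Real.sinh b) * I := by
    rw [Complex.sin_add_mul_I]; push_cast; ring
  rw [h, Complex.normSq_add_mul_I]
  nlinarith [Real.sin_sq_add_cos_sq a, Real.cosh_sq b]

lemma normSq_cos_add_mul_I (a b : ℝ) :
    Complex.normSq (Complex.cos (↑a + ↑b * I)) = Real.cos a ^ 2 + Real.sinh b ^ 2 := by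
  have h : Complex.cos (↑a + ↑b * I)
      = ↑(Real.cos a * Real.cosh b) + ↑(-(Real.sin a * Real.sinh b)) * I := by
    rw [Complex.cos_add_mul_I]; push_cast; ring
  rw [h, Complex.normSq_add_mul_I]
  nlinarith [Real.sin_sq_add_cos_sq a, Real.cosh_sq b]

lemma cot_bound_key (a b : ℝ)
    (hpos : 0 < Real.sin a ^ 2 + Real.sinh b ^ 2)
    (hle : (Real.cos a ^ 2 + Real.sinh b ^ 2) * Real.sinh (3 * Real.pi / 2) ^ 2
        ≤ (Real.sin a ^ 2 + Real.sinh b ^ 2) * Real.cosh (3 * Real.pi / 2) ^ 2) :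
    ‖Complex.cot (↑a + ↑b * I)‖
      ≤ Real.cosh (3 * Real.pi / 2) / Real.sinh (3 * Real.pi / 2) := by
  set c := 3 * Real.pi / 2 with hc
  have hcpos : 0 < c := by positivity
  have hs : 0 < Real.sinh c := Real.sinh_pos_iff.2 hcpos
  have hch : 0 < Real.cosh c := Real.cosh_pos _
  rw [Complex.cot, norm_div]
  set A := ‖Complex.cos (↑a + ↑b * I)‖ with hA
  set B := ‖Complex.sin (↑a + ↑b * I)‖ with hB
  have hA2 : A ^ 2 = Real.cos a ^ 2 + Real.sinh b ^ 2 := by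
    rw [hA, Complex.sq_norm, normSq_cos_add_mul_I]
  have hB2 : B ^ 2 = Real.sin a ^ 2 + Real.sinh b ^ 2 := by
    rw [hB, Complex.sq_norm, normSq_sin_add_mul_I]
  have hBpos : 0 < B := by
    have : 0 < B ^ 2 := hB2 ▸ hpos
    have hBnn : 0 ≤ B := norm_nonneg _
    nlinarith
  rw [div_le_div_iff₀ hBpos hs]
  have hsq : (A * Real.sinh c) ^ 2 ≤ (Real.cosh c * B) ^ 2 := by
    nlinarith [hle, hA2, hB2]
  have h1 : 0 ≤ A * Real.sinh c := by positivity
  have h2 : 0 ≤ Real.cosh c * B := by positivity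
  nlinarith [hsq, h1, h2]

theorem cot_bound_on_square (N : ℕ) (hN : 1 ≤ N) (z : ℂ)
    (hz : (|z.re| = N + 1 / 2 ∧ |z.im| ≤ N + 1 / 2) ∨
          (|z.im| = N + 1 / 2 ∧ |z.re| ≤ N + 1 / 2)) :
    ‖Complex.cot (Real.pi * z)‖
      ≤ Real.cosh (3 * Real.pi / 2) / Real.sinh (3 * Real.pi / 2) := by
  set a := Real.pi * z.re with ha
  set b := Real.pi * z.im with hb
  have hrw : (↑Real.pi * z : ℂ) = ↑a + ↑b * I := by
    rw [ha, hb]; push_cast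
    rw [mul_assoc, ← mul_add, Complex.re_add_im]
  rw [hrw]
  have hc : 0 < 3 * Real.pi / 2 := by positivity
  have hs : 0 < Real.sinh (3 * Real.pi / 2) := Real.sinh_pos_iff.2 hc
  rcases hz with ⟨hre, _⟩ | ⟨him, _⟩
  · -- vertical sides: cos a = 0
    have hcos : Real.cos a = 0 := by
      rw [Real.cos_eq_zero_iff]
      rcases abs_cases z.re with ⟨h, _⟩ | ⟨h, _⟩
      · exact ⟨N, by rw [ha]; rw [hre] at h; rw [← h]; push_cast; ring⟩
      · exact ⟨-N - 1, by rw [ha]; rw [hre] at h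
                          have hz : z.re = -(↑N + 1/2) := by linarith
                          rw [hz]; push_cast; ring⟩
    have hsin : Real.sin a ^ 2 = 1 := by
      have := Real.sin_sq_add_cos_sq a
      nlinarith
    have hcos2 : Real.cos a ^ 2 = 0 := by rw [hcos]; ring
    apply cot_bound_key
    · nlinarith [sq_nonneg (Real.sinh b)]
    · nlinarith [hcos2, hsin, Real.cosh_sq (3 * Real.pi / 2), sq_nonneg (Real.sinh b),
        sq_nonneg (Real.sinh (3 * Real.pi / 2))]
  · -- horizontal sides: |b| ≥ 3π/2
    have hb32 : 3 * Real.pi / 2 ≤ |b| := by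
      rw [hb, abs_mul, abs_of_pos Real.pi_pos]
      have h1 : (3:ℝ)/2 ≤ |z.im| := by
        rw [him]
        have : (1:ℝ) ≤ N := by exact_mod_cast hN
        linarith
      nlinarith [Real.pi_pos]
    have hsinh : Real.sinh (3 * Real.pi / 2) ^ 2 ≤ Real.sinh b ^ 2 := by
      have h1 : Real.sinh (3 * Real.pi / 2) ≤ Real.sinh |b| := Real.sinh_le_sinh.2 hb32
      have h2 : |Real.sinh b| = Real.sinh |b| := Real.abs_sinh b
      have h3 : Real.sinh b ^ 2 = Real.sinh |b| ^ 2 := by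
        rw [← h2, _root_.sq_abs]
      rw [h3]
      nlinarith
    apply cot_bound_key
    · nlinarith [sq_nonneg (Real.sin a)]
    · nlinarith [Real.cosh_sq (3 * Real.pi / 2), Real.sin_sq_add_cos_sq a,
        sq_nonneg (Real.sin a), sq_nonneg (Real.sinh b)]
end

section
/- For every integer m ≥ 1, with α = exp(πi/(2m)): ∑_{n=1}^∞ 1/(n^{2m}+1) = −1/2 + (1/(2m))·∑_{k=1}^m π·α^{2k−1}·cot(π α^{2k−1}). -/
/-!
For `y = (n + 1)²`, the partial fraction decomposition of `1 / (y ^ m + 1)` over the roots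
`β ^ (2k+1)` of `Y ^ m = -1` (with `β = α²` a primitive `2m`-th root of unity) comes from the
logarithmic derivative of `Y ^ m + 1`. Writing `β ^ (2k+1) = z_k²` with `z_k = α ^ (2k+1)`, each
resulting series `∑ₙ z² / ((n+1)² - z²)` is summed by the Mittag-Leffler expansion of `π cot (π z)`,
which applies because `z_k ^ (2m) = -1` keeps `z_k` away from the integers.
-/

open Complex Polynomial

theorem IsPrimitiveRoot.sum_one_div_sub_pow_mul {K : Type*} [Field K] {m : ℕ} {ζ : K}
    (hζ : IsPrimitiveRoot ζ m) (w : K) {y : K} (hy : y ^ m ≠ w ^ m) :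
    ∑ k ∈ Finset.range m, 1 / (y - ζ ^ k * w) = m * y ^ (m - 1) / (y ^ m - w ^ m) := by
  have hroots : (X ^ m - C (w ^ m)).roots = (Multiset.range m).map (ζ ^ · * w) :=
    hζ.nthRoots_eq rfl
  have hsplits : (X ^ m - C (w ^ m)).Splits := by
    rw [splits_iff_card_roots, hroots, Multiset.card_map, Multiset.card_range,
      natDegree_X_pow_sub_C]
  have hev : (X ^ m - C (w ^ m)).eval y ≠ 0 := by simpa [sub_eq_zero] using hy
  have hlogDeriv := hsplits.eval_derivative_div_eval_of_ne_zero hev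
  rw [hroots, Multiset.map_map, derivative_sub, derivative_C, sub_zero, derivative_X_pow,
    eval_mul, eval_C, eval_pow, eval_X, eval_sub, eval_pow, eval_X, eval_C] at hlogDeriv
  simpa [Finset.sum_eq_multiset_sum] using hlogDeriv.symm

theorem IsPrimitiveRoot.sum_pow_odd_div_sub {K : Type*} [Field K] {m : ℕ} {β : K}
    (hβ : IsPrimitiveRoot β (2 * m)) {y : K} (hy : y ^ m ≠ -1) :
    ∑ k ∈ Finset.range m, β ^ (2 * k + 1) / (y - β ^ (2 * k + 1)) = -m / (y ^ m + 1) := by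
  rcases Nat.eq_zero_or_pos m with rfl | hm
  · simp
  have hζ : IsPrimitiveRoot (β ^ 2) m := hβ.pow (by omega) rfl
  have hβm : β ^ m = -1 := (hβ.pow (by omega) (mul_comm 2 m)).eq_neg_one_of_two_right
  have hodd (k : ℕ) : β ^ (2 * k + 1) = (β ^ 2) ^ k * β := by rw [← pow_mul, pow_succ]
  have hy' : y ^ m ≠ β ^ m := hβm ▸ hy
  have hsub (k : ℕ) : y - (β ^ 2) ^ k * β ≠ 0 := by
    intro h
    apply hy'
    rw [sub_eq_zero.mp h, mul_pow, ← pow_mul, mul_comm k, pow_mul, hζ.pow_eq_one, one_pow, one_mul]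
  have hden : y ^ m + 1 ≠ 0 := fun h => hy (eq_neg_of_add_eq_zero_left h)
  simp only [hodd]
  calc ∑ k ∈ Finset.range m, (β ^ 2) ^ k * β / (y - (β ^ 2) ^ k * β)
      = ∑ k ∈ Finset.range m, (y * (1 / (y - (β ^ 2) ^ k * β)) - 1) := by
        refine Finset.sum_congr rfl fun k _ => ?_
        rw [mul_one_div, eq_sub_iff_add_eq, div_add_one (hsub k), add_sub_cancel]
    _ = -m / (y ^ m + 1) := by
        rw [Finset.sum_sub_distrib, ← Finset.mul_sum, hζ.sum_one_div_sub_pow_mul β hy', hβm,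
          sub_neg_eq_add, Finset.sum_const, Finset.card_range, nsmul_one, mul_div_assoc',
          ← mul_assoc, mul_comm y, mul_assoc, ← pow_succ', Nat.sub_add_cancel hm]
        field_simp
        ring

theorem hasSum_sq_div_sq_sub_sq {z : ℂ} (hz : z ∈ integerComplement) :
    HasSum (fun n : ℕ => z ^ 2 / (((n : ℂ) + 1) ^ 2 - z ^ 2))
      ((1 - Real.pi * z * cot (Real.pi * z)) / 2) := by
  have hterm (n : ℕ) : z ^ 2 / (((n : ℂ) + 1) ^ 2 - z ^ 2) = -z / 2 * cotTerm z n := by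
    have hn := sub_ne_zero.mpr (integerComplement_pow_two_ne_pow_two hz ((n : ℤ) + 1)).symm
    push_cast at hn
    rw [cotTerm_identity hz n, show (z + (n + 1)) * (z - (n + 1)) = -(((n : ℂ) + 1) ^ 2 - z ^ 2)
      by ring]
    field_simp
  have hsum : (1 - Real.pi * z * cot (Real.pi * z)) / 2
      = -z / 2 * (Real.pi * cot (Real.pi * z) - 1 / z) := by
    field_simp [integerComplement.ne_zero hz]
    ring
  rw [funext hterm, hsum, cot_series_rep' hz]
  exact (summable_cotTerm hz).hasSum.mul_left _

theorem mem_integerComplement_of_pow_eq_neg_one {z : ℂ} {n : ℕ} (hn : Even n) (h : z ^ n = -1) :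
    z ∈ integerComplement := by
  rintro ⟨k, rfl⟩
  have : k ^ n = -1 := by exact_mod_cast h
  linarith [hn.pow_nonneg k]

theorem Complex.isPrimitiveRoot_exp_pi_mul_I_div_sq {n : ℕ} (hn : n ≠ 0) :
    IsPrimitiveRoot (exp (Real.pi * I / n) ^ 2) n := by
  convert isPrimitiveRoot_exp n hn using 1
  rw [← exp_nat_mul]
  push_cast
  ring_nf

theorem hasSum_one_div_pow_add_one {m : ℕ} (hm : m ≠ 0) {α : ℂ}
    (hα : IsPrimitiveRoot (α ^ 2) (2 * m)) :
    HasSum (fun n : ℕ => 1 / (((n : ℂ) + 1) ^ (2 * m) + 1))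
      (-1 / 2 + 1 / (2 * m) * ∑ k ∈ Finset.range m,
        Real.pi * α ^ (2 * k + 1) * cot (Real.pi * α ^ (2 * k + 1))) := by
  have hsq (k : ℕ) : (α ^ (2 * k + 1)) ^ 2 = (α ^ 2) ^ (2 * k + 1) := by
    rw [← pow_mul, ← pow_mul, mul_comm]
  have hαm : (α ^ 2) ^ m = -1 := (hα.pow (by omega) (mul_comm 2 m)).eq_neg_one_of_two_right
  have hmem (k : ℕ) : α ^ (2 * k + 1) ∈ integerComplement := by
    refine mem_integerComplement_of_pow_eq_neg_one (even_two_mul m) ?_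
    rw [pow_mul, hsq, ← pow_mul, mul_comm, pow_mul, hαm, (odd_two_mul_add_one k).neg_one_pow]
  have hpartial (n : ℕ) : 1 / (((n : ℂ) + 1) ^ (2 * m) + 1)
      = ∑ k ∈ Finset.range m, -(1 / m) * ((α ^ (2 * k + 1)) ^ 2
          / (((n : ℂ) + 1) ^ 2 - (α ^ (2 * k + 1)) ^ 2)) := by
    have hy : (((n : ℂ) + 1) ^ 2) ^ m ≠ -1 := by
      rw [Ne, eq_neg_iff_add_eq_zero, ← pow_mul]
      exact_mod_cast Nat.succ_ne_zero ((n + 1) ^ (2 * m))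
    rw [← Finset.mul_sum]
    simp only [hsq]
    rw [hα.sum_pow_odd_div_sub hy, pow_mul]
    field_simp
  have hvalue : -1 / 2 + 1 / (2 * m) * ∑ k ∈ Finset.range m,
        Real.pi * α ^ (2 * k + 1) * cot (Real.pi * α ^ (2 * k + 1))
      = ∑ k ∈ Finset.range m,
        -(1 / m) * ((1 - Real.pi * α ^ (2 * k + 1) * cot (Real.pi * α ^ (2 * k + 1))) / 2) := by
    rw [← Finset.mul_sum, ← Finset.sum_div, Finset.sum_sub_distrib, Finset.sum_const,
      Finset.card_range, nsmul_one]
    field_simp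
    ring
  rw [funext hpartial, hvalue]
  exact hasSum_sum fun k _ => (hasSum_sq_div_sq_sub_sq (hmem k)).mul_left _

theorem zeta_plus_one_even (m : ℕ) (hm : 1 ≤ m) :
    let α : ℂ := Complex.exp (Real.pi * I / (2 * m))
    ((∑' n : ℕ, (1 : ℝ) / (((n : ℝ) + 1) ^ (2 * m) + 1) : ℝ) : ℂ)
      = -1 / 2 + (1 / (2 * m)) *
          ∑ k ∈ Finset.range m,
            (Real.pi : ℂ) * α ^ (2 * k + 1) * Complex.cot (Real.pi * α ^ (2 * k + 1)) := by
  intro α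
  have hα : IsPrimitiveRoot (α ^ 2) (2 * m) := by
    simpa [α] using isPrimitiveRoot_exp_pi_mul_I_div_sq (n := 2 * m) (by omega)
  rw [ofReal_tsum]
  push_cast
  exact (hasSum_one_div_pow_add_one (by omega) hα).tsum_eq
end

section
/- Let m ≥ 1 and g(z) = cot(πz)/(z^{2m}−1). Then the residue of g at z = 1 equals −(2m−1)/(4mπ), and likewise the residue of g at z = −1 equals −(2m−1)/(4mπ). -/
open Complex

/-- `ResidueAt f a r` : `r` is the residue of `f` at `a`, expressed via small circle integrals. -/
def ResidueAt (f : ℂ → ℂ) (a r : ℂ) : Prop :=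
  ∀ᶠ ε in nhdsWithin (0 : ℝ) (Set.Ioi 0),
    (2 * Real.pi * Complex.I)⁻¹ * (∮ z in C(a, ε), f z) = r

/-!
At `c = ±1` both `D₁ z = sin (π z)` and `D₂ z = z ^ (2m) - 1` have simple zeros, so
`Dᵢ z = (z - c) Sᵢ z` with `Sᵢ = dslope Dᵢ c` holomorphic and `Sᵢ c ≠ 0`. The function is then
`G z / (z - c) ^ 2` with `G = cos (π ·) / (S₁ S₂)` holomorphic near `c`, and Cauchy's formula for
the first derivative makes the residue `G' c`. The quotient rule computes `G' c` from
`Sᵢ c = Dᵢ' c` and `Sᵢ' c = Dᵢ'' c / 2`, the second Taylor coefficient of `Dᵢ`.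
-/

open Metric

section dslope

variable {𝕜 E : Type*} [NontriviallyNormedField 𝕜] [NormedAddCommGroup E] [NormedSpace 𝕜 E]
  {f : 𝕜 → E} {c : 𝕜}

theorem AnalyticAt.dslope_same (hf : AnalyticAt 𝕜 f c) : AnalyticAt 𝕜 (dslope f c) c :=
  let ⟨_, hp⟩ := hf
  hp.has_fpower_series_dslope_fslope.analyticAt

theorem AnalyticAt.hasDerivAt_dslope_same [CharZero 𝕜] [CompleteSpace E]
    (hf : AnalyticAt 𝕜 f c) :
    HasDerivAt (dslope f c) ((2 : 𝕜)⁻¹ • iteratedDeriv 2 f c) c := by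
  obtain ⟨p, hp⟩ := hf
  have hcoeff : iteratedDeriv 2 f c = (2 : 𝕜) • p.coeff 2 := by
    obtain ⟨r, hr⟩ := hp
    rw [iteratedDeriv_eq_iteratedFDeriv, ← hr.factorial_smul, Nat.factorial_two, two_smul,
      two_smul]
    rfl
  convert hp.has_fpower_series_dslope_fslope.hasDerivAt using 1
  rw [hcoeff, inv_smul_smul₀ two_ne_zero]
  exact FormalMultilinearSeries.coeff_fslope.symm

end dslope

theorem residueAt_div_sub_sq {G : ℂ → ℂ} {c : ℂ} (hG : AnalyticAt ℂ G c) :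
    ResidueAt (fun z => G z / (z - c) ^ 2) c (deriv G c) := by
  obtain ⟨δ, hδ, hGδ⟩ := eventually_nhds_iff_ball.mp hG.eventually_analyticAt
  filter_upwards [Ioo_mem_nhdsGT hδ] with ε ⟨hε, hεδ⟩
  have hdiff : DifferentiableOn ℂ G (closedBall c ε) := fun z hz =>
    (hGδ z (closedBall_subset_ball hεδ hz)).differentiableAt.differentiableWithinAt
  have hcauchy := hdiff.deriv_eq_smul_circleIntegral hε
  simp only [smul_eq_mul, one_div_mul_eq_div] at hcauchy
  rw [hcauchy, inv_mul_cancel_left₀ two_pi_I_ne_zero]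

theorem residueAt_div_mul_of_simple_zeros {N D₁ D₂ : ℂ → ℂ} {c : ℂ}
    (hN : AnalyticAt ℂ N c) (hD₁ : AnalyticAt ℂ D₁ c) (hD₂ : AnalyticAt ℂ D₂ c)
    (h₁ : D₁ c = 0) (h₂ : D₂ c = 0) (h₁' : deriv D₁ c ≠ 0) (h₂' : deriv D₂ c ≠ 0) :
    ResidueAt (fun z => N z / (D₁ z * D₂ z)) c
      ((deriv N c - N c * (iteratedDeriv 2 D₁ c / deriv D₁ c
        + iteratedDeriv 2 D₂ c / deriv D₂ c) / 2) / (deriv D₁ c * deriv D₂ c)) := by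
  have hS : dslope D₁ c c * dslope D₂ c c ≠ 0 := by simpa using mul_ne_zero h₁' h₂'
  have hG := hN.differentiableAt.hasDerivAt.fun_div
    (hD₁.hasDerivAt_dslope_same.fun_mul hD₂.hasDerivAt_dslope_same) hS
  convert residueAt_div_sub_sq (G := fun z => N z / (dslope D₁ c z * dslope D₂ c z))
    (hN.fun_div (hD₁.dslope_same.fun_mul hD₂.dslope_same) hS) using 1
  · ext z
    rw [← sub_smul_dslope_of_zero h₁ z, ← sub_smul_dslope_of_zero h₂ z, smul_eq_mul, smul_eq_mul,
      div_div]
    ring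
  · rw [hG.deriv]
    simp only [dslope_same, smul_eq_mul]
    field_simp

theorem deriv_sin_const_mul (a : ℂ) : deriv (fun z => sin (a * z)) = fun z => a * cos (a * z) :=
  funext fun z => by simpa [mul_comm] using ((hasDerivAt_id z).const_mul a).csin.deriv

theorem deriv_cos_const_mul (a : ℂ) : deriv (fun z => cos (a * z)) = fun z => -a * sin (a * z) :=
  funext fun z => by simpa [mul_comm] using ((hasDerivAt_id z).const_mul a).ccos.deriv

theorem iteratedDeriv_two_pow_sub_one (n : ℕ) (c : ℂ) :
    iteratedDeriv 2 (fun z => z ^ n - 1) c = n * (n - 1) * c ^ (n - 2) := by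
  have h : deriv (deriv fun z => z ^ n) c = _ := iter_deriv_pow n c 2
  simp [iteratedDeriv_succ, h, Finset.prod_range_succ]

theorem residueAt_cot_pi_mul_div_pow_sub_one {m : ℕ} (hm : 1 ≤ m) {c : ℂ}
    (hc : c = 1 ∨ c = -1) :
    ResidueAt (fun z => cot (Real.pi * z) / (z ^ (2 * m) - 1)) c
      (-((2 * (m : ℂ) - 1) / (4 * m * Real.pi))) := by
  obtain ⟨hsin, hcos⟩ : sin (Real.pi * c) = 0 ∧ cos (Real.pi * c) = -1 := by
    rcases hc with rfl | rfl <;> simp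
  have hc0 : c ≠ 0 := by rcases hc with rfl | rfl <;> norm_num
  have hc2 : c ^ 2 = 1 := by rcases hc with rfl | rfl <;> norm_num
  obtain ⟨hodd, heven⟩ : c ^ (2 * m - 1) = c ∧ c ^ (2 * m - 2) = 1 := by
    obtain ⟨k, rfl⟩ : ∃ k, m = k + 1 := ⟨m - 1, by omega⟩
    rw [show 2 * (k + 1) - 1 = 2 * k + 1 by omega, show 2 * (k + 1) - 2 = 2 * k by omega,
      pow_succ, pow_mul, hc2, one_pow, one_mul]
    exact ⟨rfl, rfl⟩
  have hm0 : (m : ℂ) ≠ 0 := by exact_mod_cast (by omega : m ≠ 0)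
  have hπ : (Real.pi : ℂ) ≠ 0 := ofReal_ne_zero.mpr Real.pi_ne_zero
  simp only [cot_eq_cos_div_sin, div_div]
  convert residueAt_div_mul_of_simple_zeros (N := fun z => cos (Real.pi * z))
    (D₁ := fun z => sin (Real.pi * z)) (D₂ := fun z => z ^ (2 * m) - 1)
    (by fun_prop) (by fun_prop) (by fun_prop) hsin ?_ ?_ ?_ using 1
  · simp [iteratedDeriv_succ, iteratedDeriv_two_pow_sub_one, deriv_sin_const_mul,
      deriv_cos_const_mul, hsin, hcos, hodd, heven]
    field_simp
    linear_combination (4 - 8 * (m : ℂ)) * hc2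
  · simp [pow_mul, hc2]
  · simp [deriv_sin_const_mul, hcos, hπ]
  · simp [hodd, hm0, hc0]

theorem residue_at_pm_one (m : ℕ) (hm : 1 ≤ m) :
    ResidueAt (fun z => Complex.cot (Real.pi * z) / (z ^ (2 * m) - 1)) 1
      (-((2 * (m : ℂ) - 1) / (4 * m * Real.pi))) ∧
    ResidueAt (fun z => Complex.cot (Real.pi * z) / (z ^ (2 * m) - 1)) (-1)
      (-((2 * (m : ℂ) - 1) / (4 * m * Real.pi))) :=
  ⟨residueAt_cot_pi_mul_div_pow_sub_one hm (.inl rfl),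
    residueAt_cot_pi_mul_div_pow_sub_one hm (.inr rfl)⟩
end

section
/- For every integer m ≥ 1, with β = exp(πi/m): ∑_{n=2}^∞ 1/(n^{2m}−1) = 1/2 + (2m−1)/(4m) − (π/(4m))·∑_{1 ≤ k ≤ 2m−1, k ≠ m} β^k·cot(π β^k). -/
/-!
Partial fractions over the `m`-th roots of unity `ζ ^ j = β ^ (2 * j)` split `1 / (n ^ (2 * m) - 1)`
into `(1 / m) * ∑ j < m, ζ ^ j / (n ^ 2 - ζ ^ j)`. Summed over `n ≥ 2`, the term `j = 0` telescopes
to `3 / 4`, and for `0 < j < m` the Mittag-Leffler expansion of `π ω cot (π ω)` at the non-real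
point `ω = β ^ j` evaluates `∑ n ≥ 2, ω ^ 2 / (n ^ 2 - ω ^ 2)`. The constants left over add up to
`∑ 0 < j < m, ζ ^ j / (1 - ζ ^ j) = (1 - m) / 2`, by pairing `j` with `m - j`. Finally
`z ↦ z cot (π z)` is even and `β ^ (j + m) = -β ^ j`, so the sum over `0 < j < m` is half the sum
over `k ∈ [1, 2m - 1] \ {m}`.
-/

open Complex Finset
open scoped Real

namespace Complex

lemma cot_neg (z : ℂ) : cot (-z) = -cot z := by
  rw [cot_eq_cos_div_sin, cot_eq_cos_div_sin, cos_neg, sin_neg, div_neg]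

lemma mem_integerComplement_of_norm_eq_one {z : ℂ} (hz : ‖z‖ = 1) (h₁ : z ≠ 1) (h₂ : z ≠ -1) :
    z ∈ integerComplement := by
  rintro ⟨n, rfl⟩
  rw [norm_intCast] at hz
  rcases (abs_eq zero_le_one).mp hz with h | h
  · exact h₁ (by exact_mod_cast h)
  · exact h₂ (by exact_mod_cast h)

lemma hasSum_sq_div_add_two_sq_sub_sq {ω : ℂ} (hω : ω ∈ integerComplement) :
    HasSum (fun n : ℕ ↦ ω ^ 2 / (((n : ℂ) + 2) ^ 2 - ω ^ 2))
      ((1 - π * ω * cot (π * ω)) / 2 - ω ^ 2 / (1 - ω ^ 2)) := by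
  have hcot : HasSum (fun n : ℕ ↦ -ω / 2 * cotTerm ω n) (-ω / 2 * (π * cot (π * ω) - 1 / ω)) :=
    (cot_series_rep' hω ▸ (summable_cotTerm hω).hasSum).mul_left _
  have hsucc : HasSum (fun n : ℕ ↦ ω ^ 2 / (((n : ℂ) + 1) ^ 2 - ω ^ 2))
      ((1 - π * ω * cot (π * ω)) / 2) := by
    convert hcot using 1
    · ext n
      have hn : ((n : ℂ) + 1) ^ 2 - ω ^ 2 ≠ 0 := by
        rw [sub_ne_zero]
        exact_mod_cast (integerComplement_pow_two_ne_pow_two hω (n + 1)).symm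
      rw [cotTerm_identity hω,
        show (ω + (n + 1)) * (ω - (n + 1)) = -(((n : ℂ) + 1) ^ 2 - ω ^ 2) by ring]
      field_simp
    · field_simp [integerComplement.ne_zero hω]
      ring
  simpa [add_assoc, one_add_one_eq_two] using (hasSum_nat_add_iff' 1).mpr hsucc

end Complex

lemma Real.hasSum_one_div_add_two_sq_sub_one :
    HasSum (fun n : ℕ ↦ 1 / (((n : ℝ) + 2) ^ 2 - 1)) (3 / 4) := by
  -- the summand is `(b n - b (n + 1)) / 2` with `b n = 1 / (n + 1) + 1 / (n + 2)`
  have hpartial : ∀ N : ℕ, ∑ n ∈ range N, 1 / (((n : ℝ) + 2) ^ 2 - 1)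
      = 3 / 4 - (1 / ((N : ℝ) + 1) + 1 / ((N : ℝ) + 2)) / 2 := by
    intro N
    induction N with
    | zero => norm_num
    | succ N ih =>
      rw [sum_range_succ, ih, show ((N : ℝ) + 2) ^ 2 - 1 = (N + 1) * (N + 3) by ring]
      push_cast
      field_simp
      ring
  rw [hasSum_iff_tendsto_nat_of_nonneg (fun n ↦ ?_), funext hpartial]
  · have h₁ := tendsto_one_div_add_atTop_nhds_zero_nat (𝕜 := ℝ)
    have h₂ := (Filter.tendsto_add_atTop_iff_nat 1).mpr h₁
    simpa [add_assoc, one_add_one_eq_two] using ((h₁.add h₂).div_const 2).const_sub (3 / 4 : ℝ)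
  · have : (1 : ℝ) ≤ ((n : ℝ) + 2) ^ 2 := by nlinarith [n.cast_nonneg (α := ℝ)]
    exact one_div_nonneg.mpr (by linarith)

lemma Complex.hasSum_one_div_add_two_sq_sub_one :
    HasSum (fun n : ℕ ↦ 1 / (((n : ℂ) + 2) ^ 2 - 1)) (3 / 4) := by
  simpa using Complex.hasSum_ofReal.mpr Real.hasSum_one_div_add_two_sq_sub_one

namespace IsPrimitiveRoot

section Field

variable {K : Type*} [Field K] {ζ : K} {m : ℕ}

lemma geom_sum_pow_eq_zero (hζ : IsPrimitiveRoot ζ m) {k : ℕ} (hk : ¬ m ∣ k) :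
    ∑ j ∈ range m, (ζ ^ k) ^ j = 0 := by
  have hζk : (ζ ^ k) ^ m = 1 := by rw [← pow_mul, mul_comm, pow_mul, hζ.pow_eq_one, one_pow]
  rw [geom_sum_eq (mt (hζ.pow_eq_one_iff_dvd k).mp hk), hζk, sub_self, zero_div]

lemma sum_pow_div_sub_pow (hζ : IsPrimitiveRoot ζ m) {y : K} (hy : y ^ m ≠ 1) :
    ∑ j ∈ range m, ζ ^ j / (y - ζ ^ j) = m / (y ^ m - 1) := by
  have hym : y ^ m - 1 ≠ 0 := sub_ne_zero.mpr hy
  -- `x / (y - x) = x (y ^ (m - 1) + y ^ (m - 2) x + ⋯ + x ^ (m - 1)) / (y ^ m - 1)` when `x ^ m = 1`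
  have hterm : ∀ j, ζ ^ j / (y - ζ ^ j)
      = (∑ i ∈ range m, y ^ i * (ζ ^ (m - i)) ^ j) / (y ^ m - 1) := by
    intro j
    have hx : (ζ ^ j) ^ m = 1 := by rw [← pow_mul, mul_comm, pow_mul, hζ.pow_eq_one, one_pow]
    have hyx : y - ζ ^ j ≠ 0 := fun h ↦ hy (by rw [sub_eq_zero.mp h, hx])
    rw [div_eq_div_iff hyx hym, ← hx, ← geom_sum₂_mul, ← mul_assoc, mul_sum]
    congr 1
    refine sum_congr rfl fun i hi ↦ ?_
    have : m - i = m - 1 - i + 1 := by have := mem_range.mp hi; omega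
    rw [this, ← pow_mul]
    ring
  rw [sum_congr rfl fun j _ ↦ hterm j, ← sum_div, sum_comm]
  congr 1
  rw [sum_eq_single 0]
  · simp [hζ.pow_eq_one]
  · intro i hi hi0
    have := mem_range.mp hi
    rw [← mul_sum, hζ.geom_sum_pow_eq_zero (Nat.not_dvd_of_pos_of_lt (by omega) (by omega)),
      mul_zero]
  · intro h
    rw [mem_range, not_lt, Nat.le_zero] at h
    simp [h]

lemma two_mul_sum_pow_div_one_sub_pow (hζ : IsPrimitiveRoot ζ m) (hm : 0 < m) :
    2 * ∑ j ∈ Ico 1 m, ζ ^ j / (1 - ζ ^ j) = 1 - m := by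
  have hpair : ∀ j ∈ Ico 1 m, ζ ^ j / (1 - ζ ^ j) + ζ ^ (m - j) / (1 - ζ ^ (m - j)) = -1 := by
    intro j hj
    obtain ⟨hj1, hjm⟩ := mem_Ico.mp hj
    have h₁ : 1 - ζ ^ j ≠ 0 := sub_ne_zero.mpr (hζ.pow_ne_one_of_pos_of_lt (by omega) hjm).symm
    have h₂ : 1 - ζ ^ (m - j) ≠ 0 :=
      sub_ne_zero.mpr (hζ.pow_ne_one_of_pos_of_lt (by omega) (by omega)).symm
    have hprod : ζ ^ j * ζ ^ (m - j) = 1 := by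
      rw [← pow_add, Nat.add_sub_cancel' hjm.le, hζ.pow_eq_one]
    field_simp
    linear_combination -hprod
  have hreflect : ∑ j ∈ Ico 1 m, ζ ^ (m - j) / (1 - ζ ^ (m - j))
      = ∑ j ∈ Ico 1 m, ζ ^ j / (1 - ζ ^ j) := by
    simpa using sum_Ico_reflect (fun j ↦ ζ ^ j / (1 - ζ ^ j)) 1 (Nat.le_succ m)
  rw [two_mul]
  nth_rewrite 2 [← hreflect]
  rw [← sum_add_distrib, sum_congr rfl hpair, sum_const, Nat.card_Ico, nsmul_eq_mul,
    Nat.cast_sub hm]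
  ring

lemma one_div_pow_two_mul_sub_one_eq {β : K} (hβ : IsPrimitiveRoot β (2 * m)) (hm : (m : K) ≠ 0)
    {x : K} (hx : x ^ (2 * m) ≠ 1) :
    1 / (x ^ (2 * m) - 1)
      = 1 / m * (1 / (x ^ 2 - 1) + ∑ j ∈ Ico 1 m, (β ^ j) ^ 2 / (x ^ 2 - (β ^ j) ^ 2)) := by
  have hm0 : 0 < m := Nat.pos_of_ne_zero (by rintro rfl; simp at hm)
  have h := (hβ.pow (by omega) rfl).sum_pow_div_sub_pow (y := x ^ 2) (by rwa [← pow_mul])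
  rw [range_eq_Ico, sum_eq_sum_Ico_succ_bot hm0] at h
  simp only [pow_zero, one_pow, zero_add, pow_right_comm β 2] at h
  rw [h, ← pow_mul]
  field_simp

end Field

lemma pow_mem_integerComplement {β : ℂ} {n j : ℕ} (hβ : IsPrimitiveRoot β n) (hj : 0 < j)
    (hjn : 2 * j < n) : β ^ j ∈ integerComplement := by
  refine mem_integerComplement_of_norm_eq_one ?_ (hβ.pow_ne_one_of_pos_of_lt hj.ne' (by omega))
    fun h ↦ hβ.pow_ne_one_of_pos_of_lt (by omega : 2 * j ≠ 0) hjn ?_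
  · rw [norm_pow, hβ.norm'_eq_one (by omega), one_pow]
  · rw [mul_comm, pow_mul, h, neg_one_sq]

end IsPrimitiveRoot

lemma sum_filter_Icc_ne_eq_two_nsmul {M A : Type*} [Monoid M] [HasDistribNeg M] [AddCommMonoid A]
    (f : M → A) (hf : ∀ z, f (-z) = f z) {β : M} {m : ℕ} (hβ : β ^ m = -1) :
    ∑ k ∈ (Icc 1 (2 * m - 1)).filter (· ≠ m), f (β ^ k) = 2 • ∑ j ∈ Ico 1 m, f (β ^ j) := by
  have hsplit : (Icc 1 (2 * m - 1)).filter (· ≠ m) = Ico 1 m ∪ Ico (1 + m) (m + m) := by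
    ext k
    simp only [mem_filter, mem_Icc, mem_union, mem_Ico]
    omega
  have hdisj : Disjoint (Ico 1 m) (Ico (1 + m) (m + m)) :=
    disjoint_left.mpr fun k h₁ h₂ ↦ by simp only [mem_Ico] at h₁ h₂; omega
  rw [hsplit, sum_union hdisj, ← sum_Ico_add', two_nsmul]
  simp only [pow_add, hβ, mul_neg_one, hf]

lemma IsPrimitiveRoot.hasSum_one_div_add_two_pow_sub_one {β : ℂ} {m : ℕ}
    (hβ : IsPrimitiveRoot β (2 * m)) (hm : 0 < m) :
    HasSum (fun n : ℕ ↦ 1 / (((n : ℂ) + 2) ^ (2 * m) - 1))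
      (1 / m * (3 / 4 + ∑ j ∈ Ico 1 m,
        ((1 - π * β ^ j * cot (π * β ^ j)) / 2 - (β ^ j) ^ 2 / (1 - (β ^ j) ^ 2)))) := by
  refine ((hasSum_one_div_add_two_sq_sub_one.add (hasSum_sum fun j hj ↦
    hasSum_sq_div_add_two_sq_sub_sq (hβ.pow_mem_integerComplement (mem_Ico.mp hj).1
      (by have := (mem_Ico.mp hj).2; omega)))).mul_left _).congr_fun fun n ↦ ?_
  have hn : ((n : ℂ) + 2) ^ (2 * m) ≠ 1 := by
    exact_mod_cast (Nat.one_lt_pow (by omega) (by omega : 1 < n + 2)).ne'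
  exact hβ.one_div_pow_two_mul_sub_one_eq (by exact_mod_cast hm.ne') hn

theorem zeta_minus_one_even (m : ℕ) (hm : 1 ≤ m) :
    let β : ℂ := Complex.exp (Real.pi * I / m)
    ((∑' n : ℕ, (1 : ℝ) / (((n : ℝ) + 2) ^ (2 * m) - 1) : ℝ) : ℂ)
      = 1 / 2 + (2 * (m : ℂ) - 1) / (4 * m)
        - (Real.pi : ℂ) / (4 * m) *
            ∑ k ∈ (Finset.Icc 1 (2 * m - 1)).filter (· ≠ m),
              β ^ k * Complex.cot (Real.pi * β ^ k) := by
  intro β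
  have hm0 : (m : ℂ) ≠ 0 := by exact_mod_cast (by omega : m ≠ 0)
  have hβ : IsPrimitiveRoot β (2 * m) := by
    convert isPrimitiveRoot_exp (2 * m) (by omega) using 2
    push_cast
    field_simp
  have hβm : β ^ m = -1 := by rw [← exp_nat_mul, mul_div_cancel₀ _ hm0, exp_pi_mul_I]
  have hfold := sum_filter_Icc_ne_eq_two_nsmul (fun z : ℂ ↦ z * cot (π * z))
    (fun z ↦ by rw [mul_neg, cot_neg, neg_mul_neg]) hβm
  have hpair := (hβ.pow (by omega) rfl).two_mul_sum_pow_div_one_sub_pow (by omega : 0 < m)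
  simp only [pow_right_comm β 2] at hpair
  rw [ofReal_tsum]
  push_cast
  rw [(hβ.hasSum_one_div_add_two_pow_sub_one (by omega)).tsum_eq, hfold]
  simp only [sum_sub_distrib, ← sum_div, mul_assoc, ← mul_sum, sum_const, Nat.card_Ico,
    nsmul_eq_mul]
  rw [Nat.cast_sub hm]
  field_simp
  linear_combination -4 * hpair
end
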